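/- If u and v are distinct vertices of a graph G with N(v) ⊆ N(u), then the folding map f : G → G∖v (f(x) = x for x ≠ v, f(v) = u) is a graph homomorphism, and the inclusion i : G∖v → G satisfies f ∘ i = id on G∖v and i ∘ f is ×-homotopic to id_G via a 1-homotopy. -/

import Mathlib

/-! Since `N(v) ⊆ N(u)`, replacing the first endpoint of an edge `x ~ y` by its fold image
keeps it an edge. Applied twice this makes the fold a homomorphism; applied once it says that
`i ∘ f` and `id` are adjacent in the exponential graph `G^G`, and an edge of `H^G` between two
homomorphisms is exactly a 1-homotopy. -/

/-- A graph: a symmetric relation on a vertex set, loops allowed. -/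
structure RGraph (V : Type) : Type where
  Adj : V → V → Prop
  symm : ∀ u v : V, Adj u v → Adj v u

/-- A graph homomorphism: a vertex map preserving adjacency. -/
def RGraph.IsHom {V W : Type} (G : RGraph V) (H : RGraph W) (f : V → W) : Prop :=
  ∀ u v : V, G.Adj u v → H.Adj (f u) (f v)

/-- The categorical product of graphs. -/
def RGraph.prod {V W : Type} (G : RGraph V) (H : RGraph W) : RGraph (V × W) :=
  ⟨fun p q => G.Adj p.1 q.1 ∧ H.Adj p.2 q.2,
   fun p q h => ⟨G.symm _ _ h.1, H.symm _ _ h.2⟩⟩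

/-- The categorical exponential graph `H^G`: vertices are all functions `V(G) → V(H)`. -/
def RGraph.exp {V W : Type} (G : RGraph V) (H : RGraph W) : RGraph (V → W) :=
  ⟨fun f f' => ∀ v v' : V, G.Adj v v' → H.Adj (f v) (f' v'),
   fun f f' h v v' hvv' => H.symm _ _ (h v' v (G.symm _ _ hvv'))⟩

/-- Multihomomorphisms between graphs. -/
def RGraph.IsMultiHom {V W : Type} (G : RGraph V) (H : RGraph W) (η : V → Set W) : Prop :=
  (∀ v, (η v).Nonempty) ∧
    ∀ x y : V, G.Adj x y → ∀ x' ∈ η x, ∀ y' ∈ η y, H.Adj x' y'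

/-- The Hom poset, ordered by pointwise containment. -/
def MultiHom {V W : Type} (G : RGraph V) (H : RGraph W) : Type :=
  {η : V → Set W // RGraph.IsMultiHom G H η}

instance {V W : Type} (G : RGraph V) (H : RGraph W) : PartialOrder (MultiHom G H) :=
  Subtype.partialOrder _

/-- The reflexive path `Iₙ` on `{0, …, n}`. -/
def pathGraph (n : ℕ) : RGraph (Fin (n + 1)) :=
  ⟨fun i j => (i : ℕ) = j ∨ (i : ℕ) + 1 = j ∨ (j : ℕ) + 1 = i,
   fun i j h => by tauto⟩

/-- ×-homotopy of vertex maps. -/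
def Homotopic {V W : Type} (G : RGraph V) (H : RGraph W) (f g : V → W) : Prop :=
  ∃ n : ℕ, 1 ≤ n ∧ ∃ F : V × Fin (n + 1) → W,
    (G.prod (pathGraph n)).IsHom H F ∧
    (∀ v, F (v, 0) = f v) ∧ (∀ v, F (v, Fin.last n) = g v)

/-- The singleton-valued multihomomorphism associated to a graph homomorphism. -/
def singletonMH {V W : Type} {G : RGraph V} {H : RGraph W} (f : V → W)
    (hf : G.IsHom H f) : MultiHom G H :=
  ⟨fun v => {f v},
   ⟨fun v => ⟨f v, rfl⟩, fun x y hxy x' hx' y' hy' => by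
      simp only [Set.mem_singleton_iff] at hx' hy'
      subst hx'; subst hy'; exact hf _ _ hxy⟩⟩

/-- Disjoint union (coproduct) of graphs. -/
def RGraph.coprod {V W : Type} (G : RGraph V) (H : RGraph W) : RGraph (V ⊕ W) :=
  ⟨Sum.LiftRel G.Adj H.Adj,
   fun u v h => by
    cases h with
    | inl h => exact Sum.LiftRel.inl (G.symm _ _ h)
    | inr h => exact Sum.LiftRel.inr (H.symm _ _ h)⟩

/-- The induced subgraph obtained by deleting the vertex `v`. -/
def RGraph.deleteVert {V : Type} (G : RGraph V) (v : V) : RGraph {x : V // x ≠ v} :=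
  ⟨fun a b => G.Adj a.1 b.1, fun a b h => G.symm _ _ h⟩

/-- The cartesian (box) product of graphs. -/
def RGraph.box {V W : Type} (G : RGraph V) (H : RGraph W) : RGraph (V × W) :=
  ⟨fun p q => (G.Adj p.1 q.1 ∧ p.2 = q.2) ∨ (p.1 = q.1 ∧ H.Adj p.2 q.2),
   fun p q h => by
    rcases h with ⟨h1, h2⟩ | ⟨h1, h2⟩
    · exact Or.inl ⟨G.symm _ _ h1, h2.symm⟩
    · exact Or.inr ⟨h1.symm, H.symm _ _ h2⟩⟩

/-- The cartesian exponential graph: vertices are the graph homomorphisms. -/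
def RGraph.cartExp {V W : Type} (G : RGraph V) (H : RGraph W) :
    RGraph {f : V → W // G.IsHom H f} :=
  ⟨fun f f' => ∀ b, H.Adj (f.1 b) (f'.1 b), fun f f' h b => H.symm _ _ (h b)⟩

/-- A ×-homotopy equivalence of graphs. -/
def HtpyEquiv {V W : Type} (G : RGraph V) (H : RGraph W) (f : V → W) : Prop :=
  G.IsHom H f ∧ ∃ g : W → V, H.IsHom G g ∧
    Homotopic G G (g ∘ f) id ∧ Homotopic H H (f ∘ g) id

/-- The one-point looped graph. -/
def oneGraph : RGraph Unit := ⟨fun _ _ => True, fun _ _ _ => trivial⟩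

theorem RGraph.isHom_prod_pathGraph_one {V W : Type} {G : RGraph V} {H : RGraph W}
    {g h : V → W} (hg : G.IsHom H g) (hh : G.IsHom H h) (hgh : (G.exp H).Adj g h) :
    (G.prod (pathGraph 1)).IsHom H (fun p => if p.2 = 0 then g p.1 else h p.1) := by
  rintro ⟨x, i⟩ ⟨y, j⟩ ⟨hxy, -⟩
  fin_cases i <;> fin_cases j
  · exact hg x y hxy
  · exact hgh x y hxy
  · exact H.symm _ _ (hgh y x (G.symm _ _ hxy))
  · exact hh x y hxy

section Fold

variable {V : Type} {G : RGraph V} {u v : V} {f : V → {x : V // x ≠ v}}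

theorem RGraph.adj_fold_left (hN : ∀ w, G.Adj v w → G.Adj u w)
    (hf1 : ∀ (x : V) (h : x ≠ v), f x = ⟨x, h⟩) (hf2 : (f v : V) = u)
    {x y : V} (hxy : G.Adj x y) : G.Adj (f x) y := by
  by_cases hx : x = v
  · subst hx
    rw [hf2]
    exact hN y hxy
  · rw [hf1 x hx]
    exact hxy

theorem RGraph.isHom_fold (hN : ∀ w, G.Adj v w → G.Adj u w)
    (hf1 : ∀ (x : V) (h : x ≠ v), f x = ⟨x, h⟩) (hf2 : (f v : V) = u) :
    G.IsHom (G.deleteVert v) f := fun _ _ hxy =>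
  G.symm _ _ (G.adj_fold_left hN hf1 hf2 (G.symm _ _ (G.adj_fold_left hN hf1 hf2 hxy)))

end Fold

theorem stmt_16_general {V : Type} (G : RGraph V) (u v : V)
    (hN : ∀ w, G.Adj v w → G.Adj u w)
    (f : V → {x : V // x ≠ v})
    (hf1 : ∀ (x : V) (h : x ≠ v), f x = ⟨x, h⟩)
    (hf2 : (f v : V) = u) :
    G.IsHom (G.deleteVert v) f ∧
    (G.deleteVert v).IsHom G (fun x => (x : V)) ∧
    (∀ x : {x : V // x ≠ v}, f (x : V) = x) ∧
    ∃ F : V × Fin 2 → V,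
      (G.prod (pathGraph 1)).IsHom G F ∧
      (∀ x, F (x, 0) = (f x : V)) ∧ (∀ x, F (x, 1) = x) := by
  have hfold : G.IsHom (G.deleteVert v) f := G.isHom_fold hN hf1 hf2
  refine ⟨hfold, fun _ _ hxy => hxy, fun x => hf1 x x.2, _,
    G.isHom_prod_pathGraph_one hfold (fun _ _ hxy => hxy)
      (fun _ _ hxy => G.adj_fold_left hN hf1 hf2 hxy),
    fun _ => rfl, fun _ => rfl⟩

/-- a folding `f : G → G∖v` is a graph homomorphism, retracts the
inclusion, and `i ∘ f` is 1-homotopic to the identity. -/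
theorem stmt_16 {V : Type} (G : RGraph V) (u v : V) (huv : u ≠ v)
    (hN : ∀ w, G.Adj v w → G.Adj u w)
    (f : V → {x : V // x ≠ v})
    (hf1 : ∀ (x : V) (h : x ≠ v), f x = ⟨x, h⟩)
    (hf2 : (f v : V) = u) :
    G.IsHom (G.deleteVert v) f ∧
    (G.deleteVert v).IsHom G (fun x => (x : V)) ∧
    (∀ x : {x : V // x ≠ v}, f (x : V) = x) ∧
    ∃ F : V × Fin 2 → V,
      (G.prod (pathGraph 1)).IsHom G F ∧
      (∀ x, F (x, 0) = (f x : V)) ∧ (∀ x, F (x, 1) = x) :=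
  stmt_16_general G u v hN f hf1 hf2
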